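/- arXiv:1509.05896 — 5 statements merged into one kernel-verified Lean document; each statement's English description precedes it below -/
import Mathlib

section
/- Let G be an induced subgraph of G' such that every connected component C of G' − V(G) has at most c vertices and the neighborhood of C inside V(G) is a clique of G. Then the tree-depth of G' is at most the tree-depth of G plus c. -/
/-!
Keep the decomposition `D` of `G'[S]` and hang every component `C` of `G' - S`, ordered into a
chain, below the deepest vertex of its neighbourhood `N(C)`: since `N(C)` is a clique, it is a
chain of `D`, so "being an ancestor of some vertex of `N(C)`" describes a root path of `D`. Edges
inside `S` are handled by `D`, edges between `C` and `N(C)` go from an ancestor to a descendant, and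
edges inside `C` lie on its chain. A chain of the new decomposition meets `S` in a chain of `D` and
meets at most one component, so it has at most `d + c` vertices.
-/

/-- A tree-depth decomposition of `G`: identifying (via the bijection μ) the nodes of the
rooted forest with the vertices, it is given by the ancestor-or-equal relation `le`,
a partial order in which the ancestors of any element form a chain, and such that the
endpoints of every edge of `G` are comparable. -/
structure TreeDepthDecomp {V : Type} (G : SimpleGraph V) where
  le : V → V → Prop
  le_refl : ∀ a, le a a
  le_trans : ∀ {a b c}, le a b → le b c → le a c
  le_antisymm : ∀ {a b}, le a b → le b a → a = b
  ancestors_chain : ∀ {a b c}, le a c → le b c → le a b ∨ le b a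
  adj_comparable : ∀ {u w}, G.Adj u w → le u w ∨ le w u

/-- The decomposition has depth at most `d`: every chain (in particular every
root-to-leaf path) has at most `d` nodes. -/
def TreeDepthDecomp.DepthLE {V : Type} {G : SimpleGraph V}
    (D : TreeDepthDecomp G) (d : ℕ) : Prop :=
  ∀ s : Finset V, (∀ a ∈ s, ∀ b ∈ s, D.le a b ∨ D.le b a) → s.card ≤ d

namespace TreeDepthDecomp

open SimpleGraph

theorem le_or_le_of_isClique {W : Type} {H : SimpleGraph W} (D : TreeDepthDecomp H)
    {s : Set W} (hs : H.IsClique s) {x y : W} (hx : x ∈ s) (hy : y ∈ s) :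
    D.le x y ∨ D.le y x := by
  rcases eq_or_ne x y with rfl | hne
  · exact Or.inl (D.le_refl x)
  · exact D.adj_comparable (hs hx hy hne)

variable {V : Type} {G' : SimpleGraph V} {S : Set V}

def outerNeighbors (C : (G'.induce Sᶜ).ConnectedComponent) : Set S :=
  {w | ∃ v ∈ C.supp, G'.Adj w v}

theorem isClique_outerNeighbors {C : (G'.induce Sᶜ).ConnectedComponent}
    (hC : G'.IsClique {w | w ∈ S ∧ ∃ v ∈ C.supp, G'.Adj w ↑v}) :
    (G'.induce S).IsClique (outerNeighbors C) :=
  fun w₁ h₁ w₂ h₂ hne => hC ⟨w₁.2, h₁⟩ ⟨w₂.2, h₂⟩ (Subtype.val_injective.ne hne)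

variable (D : TreeDepthDecomp (G'.induce S)) [LinearOrder V]

open Classical in
/-- Each component `C` of `G' - S` becomes a chain, ordered by `≤`, hung below every vertex of `S`
that is an ancestor of some vertex of `outerNeighbors C`. -/
def extendLe (a b : V) : Prop :=
  if ha : a ∈ S then
    if hb : b ∈ S then D.le ⟨a, ha⟩ ⟨b, hb⟩
    else ∃ w ∈ outerNeighbors ((G'.induce Sᶜ).connectedComponentMk ⟨b, hb⟩), D.le ⟨a, ha⟩ w
  else
    if hb : b ∈ S then False
    else (G'.induce Sᶜ).connectedComponentMk ⟨a, ha⟩ =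
      (G'.induce Sᶜ).connectedComponentMk ⟨b, hb⟩ ∧ a ≤ b

variable {D}

theorem extendLe_iff_of_mem {a b : V} (ha : a ∈ S) (hb : b ∈ S) :
    extendLe D a b ↔ D.le ⟨a, ha⟩ ⟨b, hb⟩ := by
  simp only [extendLe, dif_pos ha, dif_pos hb]

theorem connectedComponentMk_eq_of_extendLe {a b : V} (ha : a ∉ S) (hb : b ∉ S)
    (h : extendLe D a b) :
    (G'.induce Sᶜ).connectedComponentMk ⟨a, ha⟩ = (G'.induce Sᶜ).connectedComponentMk ⟨b, hb⟩ := by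
  simp only [extendLe, dif_neg ha, dif_neg hb] at h
  exact h.1

theorem extendLe_refl (a : V) : extendLe D a a := by
  unfold extendLe
  split_ifs
  · exact D.le_refl _
  · exact ⟨rfl, le_rfl⟩

theorem extendLe_trans {a b c : V} (hab : extendLe D a b) (hbc : extendLe D b c) :
    extendLe D a c := by
  unfold extendLe at *
  split_ifs at hab hbc ⊢
  · exact D.le_trans hab hbc
  · obtain ⟨w, hw, hbw⟩ := hbc
    exact ⟨w, hw, D.le_trans hab hbw⟩
  · obtain ⟨w, hw, haw⟩ := hab
    exact ⟨w, hbc.1 ▸ hw, haw⟩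
  · exact ⟨hab.1.trans hbc.1, hab.2.trans hbc.2⟩

theorem extendLe_antisymm {a b : V} (hab : extendLe D a b) (hba : extendLe D b a) : a = b := by
  unfold extendLe at *
  split_ifs at hab hba
  · exact congrArg Subtype.val (D.le_antisymm hab hba)
  · exact _root_.le_antisymm hab.2 hba.2

theorem extendLe_ancestors_chain
    (hN : ∀ C : (G'.induce Sᶜ).ConnectedComponent, (G'.induce S).IsClique (outerNeighbors C))
    {a b c : V} (hac : extendLe D a c) (hbc : extendLe D b c) :
    extendLe D a b ∨ extendLe D b a := by
  unfold extendLe at *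
  split_ifs at hac hbc ⊢
  · exact D.ancestors_chain hac hbc
  · obtain ⟨w₁, hw₁, haw₁⟩ := hac
    obtain ⟨w₂, hw₂, hbw₂⟩ := hbc
    -- the neighbourhood of the component of `c` is a chain, so `a` and `b` have a common descendant
    rcases D.le_or_le_of_isClique (hN _) hw₁ hw₂ with h | h
    · exact D.ancestors_chain (D.le_trans haw₁ h) hbw₂
    · exact D.ancestors_chain haw₁ (D.le_trans hbw₂ h)
  · obtain ⟨w, hw, haw⟩ := hac
    exact Or.inl ⟨w, hbc.1 ▸ hw, haw⟩
  · obtain ⟨w, hw, hbw⟩ := hbc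
    exact Or.inr ⟨w, hac.1 ▸ hw, hbw⟩
  · exact (le_total a b).imp (⟨hac.1.trans hbc.1.symm, ·⟩) (⟨hbc.1.trans hac.1.symm, ·⟩)

theorem extendLe_adj_comparable {u w : V} (huw : G'.Adj u w) :
    extendLe D u w ∨ extendLe D w u := by
  unfold extendLe
  split_ifs with hu hw hw
  · exact D.adj_comparable huw
  · exact Or.inl ⟨⟨u, hu⟩, ⟨⟨w, hw⟩, rfl, huw⟩, D.le_refl _⟩
  · exact Or.inr ⟨⟨w, hw⟩, ⟨⟨u, hu⟩, rfl, huw.symm⟩, D.le_refl _⟩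
  · have hcomp := ConnectedComponent.sound (G := G'.induce Sᶜ) (v := ⟨u, hu⟩) (w := ⟨w, hw⟩)
      (Adj.reachable huw)
    exact (le_total u w).imp (⟨hcomp, ·⟩) (⟨hcomp.symm, ·⟩)

variable (D) in
def extend
    (hN : ∀ C : (G'.induce Sᶜ).ConnectedComponent, (G'.induce S).IsClique (outerNeighbors C)) :
    TreeDepthDecomp G' where
  le := extendLe D
  le_refl := extendLe_refl
  le_trans := extendLe_trans
  le_antisymm := extendLe_antisymm
  ancestors_chain := extendLe_ancestors_chain hN
  adj_comparable := extendLe_adj_comparable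

section Depth

open Classical

variable {s : Finset V} (hs : ∀ a ∈ s, ∀ b ∈ s, extendLe D a b ∨ extendLe D b a)
include hs

theorem card_filter_mem_le_of_extendLe {d : ℕ} (hD : D.DepthLE d) :
    (s.filter (· ∈ S)).card ≤ d := by
  rw [← Finset.card_subtype]
  refine hD _ fun a ha b hb => ?_
  rw [Finset.mem_subtype] at ha hb
  simpa only [extendLe_iff_of_mem a.2 b.2, extendLe_iff_of_mem b.2 a.2] using hs a ha b hb

theorem card_filter_not_mem_le_of_extendLe [Finite V] {c : ℕ}
    (hcard : ∀ C : (G'.induce Sᶜ).ConnectedComponent, C.supp.ncard ≤ c) :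
    (s.filter (· ∉ S)).card ≤ c := by
  obtain hempty | ⟨x, hx⟩ := (s.filter (· ∉ S)).eq_empty_or_nonempty
  · simp [hempty]
  obtain ⟨hxs, hxS⟩ := Finset.mem_filter.mp hx
  have hsub : (s.filter (· ∉ S) : Set V) ⊆
      Subtype.val '' ((G'.induce Sᶜ).connectedComponentMk ⟨x, hxS⟩).supp := by
    intro a ha
    obtain ⟨has, haS⟩ := Finset.mem_filter.mp ha
    refine ⟨⟨a, haS⟩, ?_, rfl⟩
    rcases hs a has x hxs with h | h
    · exact connectedComponentMk_eq_of_extendLe haS hxS h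
    · exact (connectedComponentMk_eq_of_extendLe hxS haS h).symm
  calc (s.filter (· ∉ S)).card
      ≤ (Subtype.val '' ((G'.induce Sᶜ).connectedComponentMk ⟨x, hxS⟩).supp).ncard := by
        rw [← Set.ncard_coe_finset]
        exact Set.ncard_le_ncard hsub
    _ ≤ c := by
        rw [Set.ncard_image_of_injective _ Subtype.val_injective]
        exact hcard _

end Depth

theorem depthLE_extend [Finite V] {c d : ℕ}
    (hN : ∀ C : (G'.induce Sᶜ).ConnectedComponent, (G'.induce S).IsClique (outerNeighbors C))
    (hcard : ∀ C : (G'.induce Sᶜ).ConnectedComponent, C.supp.ncard ≤ c) (hD : D.DepthLE d) :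
    (D.extend hN).DepthLE (d + c) := fun s hs => by
  classical
  rw [← Finset.card_filter_add_card_filter_not (· ∈ S)]
  exact add_le_add (card_filter_mem_le_of_extendLe hs hD)
    (card_filter_not_mem_le_of_extendLe hs hcard)

end TreeDepthDecomp

/-- if `G = G'[S]` is an induced subgraph of `G'` such that every connected
component `C` of `G' - S` has at most `c` vertices and the neighborhood of `C` inside `S`
is a clique of `G`, then the tree-depth of `G'` is at most the tree-depth of `G` plus `c`. -/
theorem treedepth_of_augmented {V : Type} [Fintype V]
    (G' : SimpleGraph V) (S : Set V) (c d : ℕ)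
    (hcard : ∀ C : (G'.induce Sᶜ).ConnectedComponent, C.supp.ncard ≤ c)
    (hclique : ∀ C : (G'.induce Sᶜ).ConnectedComponent,
      G'.IsClique {w | w ∈ S ∧ ∃ v ∈ C.supp, G'.Adj w ↑v})
    (D : TreeDepthDecomp (G'.induce S)) (hD : D.DepthLE d) :
    ∃ D' : TreeDepthDecomp G', D'.DepthLE (d + c) := by
  let : LinearOrder V := IsWellOrder.linearOrder WellOrderingRel
  have hN C := TreeDepthDecomp.isClique_outerNeighbors (hclique C)
  exact ⟨D.extend hN, TreeDepthDecomp.depthLE_extend hN hcard hD⟩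
end

section
/- Let G be an induced subgraph of G' such that every connected component C of G' − V(G) has at most c vertices and the neighborhood of C inside V(G) is a clique of G. Then the treewidth of G' is at most the treewidth of G plus c. -/
/-!
Start from a tree decomposition of `G'[S]` of width `k`. Every clique of a graph lies in a single
bag of any tree decomposition (the Helly property of subtrees of a tree: if the subtree of bags of
`v` meets a subtree through the node `i`, then it meets it in its node nearest to `i`). So the
neighbourhood of each component `C` of `G' - S` lies in some bag `B`, and hanging a new leaf bag
`B ∪ C` off the node of `B` covers every edge at `C`, keeps the bags of each vertex connected, and
has at most `k + 1 + c` vertices.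
-/

open SimpleGraph

/-- A tree decomposition of `G` over the tree `T`: bags indexed by the nodes of `T`
covering all vertices and edges, with each vertex's set of bags inducing a connected
subtree of `T`. -/
structure TreeDecomp {V ι : Type} (G : SimpleGraph V) (T : SimpleGraph ι) where
  isTree : T.IsTree
  bags : ι → Finset V
  covers_vertex : ∀ v, ∃ i, v ∈ bags i
  covers_edge : ∀ {u w}, G.Adj u w → ∃ i, u ∈ bags i ∧ w ∈ bags i
  bags_connected : ∀ v, (T.induce {i | v ∈ bags i}).Connected
/-- `G` has treewidth at most `k`: some tree decomposition has all bags of size at most `k+1`. -/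
def TreewidthLE {V : Type} (G : SimpleGraph V) (k : ℕ) : Prop :=
  ∃ (ι : Type) (T : SimpleGraph ι) (D : TreeDecomp G T), ∀ i, (D.bags i).card ≤ k + 1

namespace SimpleGraph

variable {ι κ : Type*} {T : SimpleGraph ι}

lemma IsAcyclic.support_subset_of_isPath (hT : T.IsAcyclic) {s : Set ι}
    (hs : (T.induce s).Connected) {x y : ι} (hx : x ∈ s) (hy : y ∈ s) {p : T.Walk x y}
    (hp : p.IsPath) : ∀ z ∈ p.support, z ∈ s := by
  obtain ⟨q, hq⟩ := (hs ⟨x, hx⟩ ⟨y, hy⟩).exists_isPath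
  let e : T.induce s ↪g T := Embedding.induce s
  have hpq : p = q.map e.toHom :=
    congrArg Subtype.val ((hT.subsingleton_path x y).elim ⟨p, hp⟩ ⟨_, hq.map e.injective⟩)
  intro z hz
  subst hpq
  obtain ⟨z, -, rfl⟩ := List.mem_map.1 ((Walk.support_map e.toHom q) ▸ hz)
  exact z.2

/-- The gate of `s` seen from `i`: the vertex of `s` nearest to `i`. -/
lemma IsTree.exists_gate (hT : T.IsTree) {s : Set ι} (hs : (T.induce s).Connected) (i : ι) :
    ∃ a ∈ s, ∀ t : Set ι, (T.induce t).Connected → i ∈ t → (s ∩ t).Nonempty → a ∈ t := by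
  classical
  obtain ⟨⟨a₀, ha₀⟩⟩ := hs.nonempty
  set a := Function.argminOn (T.dist i) s ⟨a₀, ha₀⟩
  have ha : a ∈ s := Function.argminOn_mem _ _ _
  obtain ⟨p, hp, hplen⟩ := hT.connected.exists_path_of_dist i a
  have hp_meets_s : ∀ y ∈ p.support, y ∈ s → y = a := by
    intro y hy hys
    have hlen := congrArg Walk.length (p.take_spec hy)
    rw [Walk.length_append] at hlen
    have : T.dist i a ≤ T.dist i y := Function.argminOn_le _ _ hys
    have : T.dist i y ≤ (p.takeUntil y hy).length := dist_le _
    exact Walk.eq_of_length_eq_zero (by omega : (p.dropUntil y hy).length = 0)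
  refine ⟨a, ha, fun t ht hit ⟨b, hbs, hbt⟩ => ?_⟩
  obtain ⟨r, hr⟩ := (hT.connected a b).exists_isPath
  have hr_sub := hT.isAcyclic.support_subset_of_isPath hs ha hbs hr
  have hr_nodup := hr.support_nodup
  rw [← Walk.cons_tail_support, List.nodup_cons] at hr_nodup
  have hpr : (p.append r).IsPath := by
    rw [Walk.isPath_def, Walk.support_append]
    refine hp.support_nodup.append hr_nodup.2 fun z hzp hzr => ?_
    obtain rfl := hp_meets_s z hzp (hr_sub z (List.mem_of_mem_tail hzr))
    exact hr_nodup.1 hzr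
  exact hT.isAcyclic.support_subset_of_isPath ht hit hbt hpr a
    ((Walk.mem_support_append_iff _ _).2 (.inl p.end_mem_support))

lemma isBridge_of_forall_adj_eq {V : Type*} {G : SimpleGraph V} {v w : V} (hvw : v ≠ w)
    (h : ∀ u, G.Adj v u → u = w) : G.IsBridge s(v, w) :=
  isBridge_iff_forall_walk_mem_edges.2 fun p => by
    cases p with
    | nil => exact absurd rfl hvw
    | cons hadj q => obtain rfl := h _ hadj; simp

def attachLeaves (T : SimpleGraph ι) (f : κ → ι) : SimpleGraph (ι ⊕ κ) where
  Adj
    | .inl a, .inl b => T.Adj a b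
    | .inl a, .inr x => a = f x
    | .inr x, .inl a => a = f x
    | .inr _, .inr _ => False
  symm := ⟨by rintro (a | x) (b | y) h; exacts [h.symm, h, h, h]⟩
  loopless := ⟨by rintro (a | x) h; exacts [T.loopless.irrefl a h, h]⟩

variable {f : κ → ι}

lemma attachLeaves_adj_inr_inl (x : κ) : (T.attachLeaves f).Adj (.inr x) (.inl (f x)) := rfl

lemma IsAcyclic.attachLeaves (hT : T.IsAcyclic) (f : κ → ι) : (T.attachLeaves f).IsAcyclic := by
  have isBridge_leaf (x : κ) : (T.attachLeaves f).IsBridge s(.inr x, .inl (f x)) :=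
    isBridge_of_forall_adj_eq Sum.inr_ne_inl fun
      | .inl _, h => congrArg Sum.inl h
      | .inr _, h => h.elim
  rw [isAcyclic_iff_forall_adj_isBridge] at hT ⊢
  rintro (a | x) (b | y) hadj
  · rw [isBridge_iff, reachable_iff_reflTransGen]
    intro hreach
    -- retracting each leaf onto its attachment node turns `hreach` into a detour around `ab` in `T`
    apply isBridge_iff.1 (hT hadj)
    rw [reachable_iff_reflTransGen]
    refine hreach.lift' (Sum.elim id f) ?_
    rintro (a' | x') (b' | y') ⟨h, hne⟩
    · exact .single ⟨h, by simpa using hne⟩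
    · exact h ▸ .refl
    · exact h ▸ .refl
    · exact h.elim
  · obtain rfl : a = f y := hadj
    rw [Sym2.eq_swap]
    exact isBridge_leaf y
  · obtain rfl : b = f x := hadj
    exact isBridge_leaf x
  · exact hadj.elim

lemma Connected.attachLeaves_induce_preimage {A : Set ι} (hA : (T.induce A).Connected) :
    ((T.attachLeaves f).induce (Sum.elim id f ⁻¹' A)).Connected := by
  let φ : T.induce A →g (T.attachLeaves f).induce (Sum.elim id f ⁻¹' A) :=
    ⟨fun a => ⟨.inl a, a.2⟩, fun h => h⟩
  have reachable_inl : ∀ x, ((T.attachLeaves f).induce _).Reachable x (φ ⟨Sum.elim id f x, x.2⟩)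
    | ⟨.inl _, _⟩ => .rfl
    | ⟨.inr x, _⟩ =>
      Adj.reachable (G := (T.attachLeaves f).induce _) (attachLeaves_adj_inr_inl (T := T) x)
  obtain ⟨a⟩ := hA.nonempty
  exact (connected_iff _).2 ⟨fun x y =>
    (reachable_inl x).trans (((hA _ _).map φ).trans (reachable_inl y).symm), ⟨φ a⟩⟩

lemma Connected.attachLeaves (hT : T.Connected) : (T.attachLeaves f).Connected := by
  have := (T.induceUnivIso.connected_iff.2 hT).attachLeaves_induce_preimage (f := f)
  rw [Set.preimage_univ] at this
  exact (induceUnivIso _).connected_iff.1 this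

lemma IsTree.attachLeaves (hT : T.IsTree) (f : κ → ι) : (T.attachLeaves f).IsTree :=
  ⟨hT.connected.attachLeaves, hT.isAcyclic.attachLeaves f⟩

end SimpleGraph

namespace TreeDecomp

variable {V ι : Type} {G : SimpleGraph V} {T : SimpleGraph ι}

lemma exists_subset_bag_of_isClique (D : TreeDecomp G T) {W : Finset V}
    (hW : G.IsClique (W : Set V)) : ∃ i, W ⊆ D.bags i := by
  classical
  induction W using Finset.induction_on with
  | empty =>
    obtain ⟨i⟩ := D.isTree.connected.nonempty
    exact ⟨i, Finset.empty_subset _⟩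
  | insert v W hv ih =>
    obtain ⟨i, hi⟩ := ih (hW.subset (by simp))
    obtain ⟨a, ha, hgate⟩ := D.isTree.exists_gate (D.bags_connected v) i
    refine ⟨a, Finset.insert_subset ha fun w hw => hgate _ (D.bags_connected w) (hi hw) ?_⟩
    exact D.covers_edge (hW (by simp) (by simp [hw]) (ne_of_mem_of_not_mem hw hv).symm)

variable [Finite V] {S : Set V} (D : TreeDecomp (G.induce S) T)
  (f : (G.induce Sᶜ).ConnectedComponent → ι)

open Classical in
noncomputable def augmentBags : ι ⊕ (G.induce Sᶜ).ConnectedComponent → Finset V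
  | .inl a => (D.bags a).map (.subtype _)
  | .inr C => (D.bags (f C)).map (.subtype _) ∪ (Set.toFinite (Subtype.val '' C.supp)).toFinset

lemma mem_augmentBags_of_mem {v : V} (hv : v ∈ S) (x) :
    v ∈ D.augmentBags f x ↔ ⟨v, hv⟩ ∈ D.bags (Sum.elim id f x) := by
  rcases x with a | C <;> simp [augmentBags, hv]

lemma mem_augmentBags_of_notMem {v : V} (hv : v ∉ S) (x) :
    v ∈ D.augmentBags f x ↔ x = .inr ((G.induce Sᶜ).connectedComponentMk ⟨v, hv⟩) := by
  rcases x with a | C <;> simp [augmentBags, hv, eq_comm]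

lemma card_augmentBags_le {k c : ℕ} (hD : ∀ i, (D.bags i).card ≤ k + 1)
    (hC : ∀ C : (G.induce Sᶜ).ConnectedComponent, C.supp.ncard ≤ c) (x) :
    (D.augmentBags f x).card ≤ k + 1 + c := by
  classical
  rcases x with a | C
  · simpa [augmentBags] using (hD a).trans (Nat.le_add_right _ _)
  · refine (Finset.card_union_le _ _).trans (add_le_add (by simpa using hD (f C)) ?_)
    rw [← Set.ncard_eq_toFinset_card, Set.ncard_image_of_injective _ Subtype.val_injective]
    exact hC C

variable {D f}

lemma exists_mem_augmentBags_of_adj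
    (hf : ∀ C (u : S) (w : ↥Sᶜ), w ∈ C.supp → G.Adj u w → u ∈ D.bags (f C))
    {u w : V} (huw : G.Adj u w) : ∃ x, u ∈ D.augmentBags f x ∧ w ∈ D.augmentBags f x := by
  wlog hw : w ∉ S generalizing u w
  · by_cases hu : u ∈ S
    · rw [not_not] at hw
      obtain ⟨a, hua, hwa⟩ :=
        D.covers_edge (show (G.induce S).Adj ⟨u, hu⟩ ⟨w, hw⟩ from huw)
      exact ⟨.inl a, (D.mem_augmentBags_of_mem f hu _).2 hua,
        (D.mem_augmentBags_of_mem f hw _).2 hwa⟩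
    · obtain ⟨x, hwx, hux⟩ := this huw.symm hu
      exact ⟨x, hux, hwx⟩
  refine ⟨_, ?_, (D.mem_augmentBags_of_notMem f hw _).2 rfl⟩
  by_cases hu : u ∈ S
  · exact (D.mem_augmentBags_of_mem f hu _).2 (hf _ ⟨u, hu⟩ ⟨w, hw⟩ rfl huw)
  · exact (D.mem_augmentBags_of_notMem f hu _).2
      (congrArg Sum.inr (ConnectedComponent.sound (Adj.reachable (G := G.induce Sᶜ) huw.symm)))

lemma connected_induce_augmentBags (v : V) :
    ((T.attachLeaves f).induce {x | v ∈ D.augmentBags f x}).Connected := by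
  by_cases hv : v ∈ S
  · rw [show {x | v ∈ D.augmentBags f x} = Sum.elim id f ⁻¹' {a | ⟨v, hv⟩ ∈ D.bags a} from
      Set.ext (D.mem_augmentBags_of_mem f hv)]
    exact (D.bags_connected _).attachLeaves_induce_preimage
  · rw [show {x | v ∈ D.augmentBags f x} = {.inr ((G.induce Sᶜ).connectedComponentMk ⟨v, hv⟩)}
      from Set.ext (D.mem_augmentBags_of_notMem f hv), induce_singleton_eq_top]
    exact connected_top

noncomputable def augment
    (hf : ∀ C (u : S) (w : ↥Sᶜ), w ∈ C.supp → G.Adj u w → u ∈ D.bags (f C)) :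
    TreeDecomp G (T.attachLeaves f) where
  isTree := D.isTree.attachLeaves f
  bags := D.augmentBags f
  covers_vertex v := by
    by_cases hv : v ∈ S
    · obtain ⟨a, ha⟩ := D.covers_vertex ⟨v, hv⟩
      exact ⟨.inl a, (D.mem_augmentBags_of_mem f hv _).2 ha⟩
    · exact ⟨_, (D.mem_augmentBags_of_notMem f hv _).2 rfl⟩
  covers_edge := exists_mem_augmentBags_of_adj hf
  bags_connected := connected_induce_augmentBags

end TreeDecomp

/-- if `G = G'[S]` is an induced subgraph of `G'` such that every connected
component `C` of `G' - S` has at most `c` vertices and the neighborhood of `C` inside `S`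
is a clique of `G`, then the treewidth of `G'` is at most the treewidth of `G` plus `c`. -/
theorem treewidth_of_augmented {V : Type} [Fintype V]
    (G' : SimpleGraph V) (S : Set V) (c k : ℕ)
    (hcard : ∀ C : (G'.induce Sᶜ).ConnectedComponent, C.supp.ncard ≤ c)
    (hclique : ∀ C : (G'.induce Sᶜ).ConnectedComponent,
      G'.IsClique {w | w ∈ S ∧ ∃ v ∈ C.supp, G'.Adj w ↑v})
    (hG : TreewidthLE (G'.induce S) k) :
    TreewidthLE G' (k + c) := by
  obtain ⟨ι, T, D, hD⟩ := hG
  have hN : ∀ C : (G'.induce Sᶜ).ConnectedComponent, ∃ i,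
      ∀ (u : S) (w : ↥Sᶜ), w ∈ C.supp → G'.Adj u w → u ∈ D.bags i := by
    intro C
    set N := {u : S | ∃ w ∈ C.supp, G'.Adj u w}
    obtain ⟨i, hi⟩ := D.exists_subset_bag_of_isClique (W := (Set.toFinite N).toFinset) <| by
      rw [Set.Finite.coe_toFinset, isClique_induce_iff]
      refine (hclique C).subset ?_
      rintro _ ⟨u, hu, rfl⟩
      exact ⟨u.2, hu⟩
    exact ⟨i, fun u w hw huw => hi ((Set.toFinite N).mem_toFinset.2 ⟨w, hw, huw⟩)⟩
  choose f hf using hN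
  exact ⟨_, _, D.augment hf, fun x => (D.card_augmentBags_le f hD hcard x).trans (by omega)⟩
end

section
/- If G admits an H-deconstruction of width w and H admits a tree decomposition of width w_h, then G admits a tree decomposition of width at most w·(w_h+1) − 1; in particular, the treewidth of G is at most w times (treewidth of H plus 1). -/
/-- An `H`-deconstruction of `G`: bags indexed by vertices of `H` covering all vertices of `G`,
every edge of `G` contained in one bag or in the union of two bags indexed by adjacent
vertices of `H`, and each vertex's set of bags connected in `H`. -/
structure Deconstruction {V ι : Type} (G : SimpleGraph V) (H : SimpleGraph ι) where
  B : ι → Finset V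
  covers_vertex : ∀ v, ∃ h, v ∈ B h
  covers_edge : ∀ {u w}, G.Adj u w →
    (∃ h, u ∈ B h ∧ w ∈ B h) ∨ ∃ h h', H.Adj h h' ∧ u ∈ B h ∧ w ∈ B h'
  bags_connected : ∀ v, (H.induce {h | v ∈ B h}).Connected

/-- The deconstruction has width at most `w`: every bag, and every union of two bags
indexed by adjacent vertices of `H`, has size at most `w`. -/
def Deconstruction.WidthLE {V ι : Type} [DecidableEq V] {G : SimpleGraph V}
    {H : SimpleGraph ι} (D : Deconstruction G H) (w : ℕ) : Prop :=
  (∀ h, (D.B h).card ≤ w) ∧ ∀ {h h'}, H.Adj h h' → (D.B h ∪ D.B h').card ≤ w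

/-!
Substitute, in each bag of the tree decomposition of `H`, every vertex `h` by the bag `B h` of
the deconstruction: the new bag at `s` is `⋃_{h ∈ bags s} B h`, of size at most `(wh + 1) * w`.
An edge of `G` lies in some `B h`, or in `B h ∪ B h'` with `hh'` an edge of `H`, and some tree
bag contains `h` (resp. `h` and `h'`). The tree nodes whose new bag contains `v` are the union,
over the connected set `{h | v ∈ B h}`, of the subtrees `{s | h ∈ bags s}`; these are connected
and overlap whenever their indices are adjacent in `H`, so the union is connected.
-/

namespace SimpleGraph

variable {ι κ : Type*} {T : SimpleGraph κ} {H : SimpleGraph ι}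

theorem induce_biUnion_connected {S : Set ι} (hS : (H.induce S).Connected) {A : ι → Set κ}
    (hA : ∀ h ∈ S, (T.induce (A h)).Connected)
    (hAdj : ∀ h ∈ S, ∀ h' ∈ S, H.Adj h h' → (A h ∩ A h').Nonempty) :
    (T.induce (⋃ h ∈ S, A h)).Connected := by
  set U := ⋃ h ∈ S, A h
  have hAU : ∀ h ∈ S, A h ⊆ U := fun h hh => Set.subset_biUnion_of_mem hh
  have within : ∀ h (hh : h ∈ S) x (hx : x ∈ A h) y (hy : y ∈ A h),
      (T.induce U).Reachable ⟨x, hAU h hh hx⟩ ⟨y, hAU h hh hy⟩ := fun h hh x hx y hy =>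
    ((hA h hh).preconnected ⟨x, hx⟩ ⟨y, hy⟩).map (induceHomOfLE T (hAU h hh)).toHom
  obtain ⟨h₀, hh₀⟩ := hS.nonempty.some
  obtain ⟨u, hu⟩ := (hA h₀ hh₀).nonempty.some
  set u' : U := ⟨u, hAU h₀ hh₀ hu⟩
  have along : ∀ {a b : S} (_ : (H.induce S).Walk a b),
      (∀ x (hx : x ∈ A a), (T.induce U).Reachable u' ⟨x, hAU a a.2 hx⟩) →
      ∀ y (hy : y ∈ A b), (T.induce U).Reachable u' ⟨y, hAU b b.2 hy⟩ := by
    intro a b p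
    induction p with
    | nil => exact id
    | @cons a c b hac _ ih =>
      refine fun ha => ih fun y hy => ?_
      obtain ⟨z, hza, hzc⟩ := hAdj a a.2 c c.2 hac
      exact (ha z hza).trans (within c c.2 z hzc y hy)
  refine connected_iff_exists_forall_reachable _ |>.2 ⟨u', ?_⟩
  rintro ⟨y, hyU⟩
  obtain ⟨h, hh, hy⟩ := Set.mem_iUnion₂.1 hyU
  obtain ⟨p⟩ := hS.preconnected ⟨h₀, hh₀⟩ ⟨h, hh⟩
  exact along p (within h₀ hh₀ u hu) y hy

end SimpleGraph

namespace Deconstruction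

variable {V ι κ : Type} [DecidableEq V] {G : SimpleGraph V} {H : SimpleGraph ι}
  {T : SimpleGraph κ}

def composedBags (Dec : Deconstruction G H) (TD : TreeDecomp H T) (s : κ) : Finset V :=
  (TD.bags s).biUnion Dec.B

variable (Dec : Deconstruction G H) (TD : TreeDecomp H T)

theorem mem_composedBags {v : V} {s : κ} :
    v ∈ Dec.composedBags TD s ↔ ∃ h ∈ TD.bags s, v ∈ Dec.B h :=
  Finset.mem_biUnion

theorem card_composedBags_le {w wh : ℕ} (hw : ∀ h, (Dec.B h).card ≤ w)
    (hTD : ∀ s, (TD.bags s).card ≤ wh + 1) (s : κ) :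
    (Dec.composedBags TD s).card ≤ w * (wh + 1) :=
  calc (Dec.composedBags TD s).card ≤ (TD.bags s).card * w :=
        Finset.card_biUnion_le_card_mul _ _ _ fun h _ => hw h
    _ ≤ (wh + 1) * w := Nat.mul_le_mul_right _ (hTD s)
    _ = w * (wh + 1) := Nat.mul_comm _ _

theorem composedBags_connected (v : V) :
    (T.induce {s | v ∈ Dec.composedBags TD s}).Connected := by
  have hU : {s | v ∈ Dec.composedBags TD s} =
      ⋃ h ∈ {h | v ∈ Dec.B h}, {s | h ∈ TD.bags s} := by
    ext s
    simp only [Set.mem_ofPred_eq, mem_composedBags, Set.mem_iUnion, exists_prop]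
    exact exists_congr fun h => and_comm
  rw [hU]
  exact SimpleGraph.induce_biUnion_connected (Dec.bags_connected v)
    (fun h _ => TD.bags_connected h) fun _ _ _ _ hhh' => TD.covers_edge hhh'

def composedTreeDecomp : TreeDecomp G T where
  isTree := TD.isTree
  bags := Dec.composedBags TD
  covers_vertex v := by
    obtain ⟨h, hvh⟩ := Dec.covers_vertex v
    obtain ⟨s, hhs⟩ := TD.covers_vertex h
    exact ⟨s, (Dec.mem_composedBags TD).2 ⟨h, hhs, hvh⟩⟩
  covers_edge huv := by
    rcases Dec.covers_edge huv with ⟨h, hu, hv⟩ | ⟨h, h', hhh', hu, hv⟩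
    · obtain ⟨s, hhs⟩ := TD.covers_vertex h
      exact ⟨s, (Dec.mem_composedBags TD).2 ⟨h, hhs, hu⟩,
        (Dec.mem_composedBags TD).2 ⟨h, hhs, hv⟩⟩
    · obtain ⟨s, hhs, hhs'⟩ := TD.covers_edge hhh'
      exact ⟨s, (Dec.mem_composedBags TD).2 ⟨h, hhs, hu⟩,
        (Dec.mem_composedBags TD).2 ⟨h', hhs', hv⟩⟩
  bags_connected := Dec.composedBags_connected TD

end Deconstruction

/-- if `G` admits an `H`-deconstruction of width `w` and `H` admits a tree
decomposition of width `w_h` (bags of size at most `w_h + 1`), then `G` admits a tree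
decomposition (over the same tree) with bags of size at most `w * (w_h + 1)`, i.e. of
width at most `w * (w_h + 1) - 1`; in particular the treewidth of `G` is at most
`w * (w_h + 1) - 1`. -/
theorem treewidth_of_deconstruction {V ι κ : Type} [DecidableEq V]
    (G : SimpleGraph V) (H : SimpleGraph ι) (Dec : Deconstruction G H)
    (w : ℕ) (hw : Dec.WidthLE w)
    (T : SimpleGraph κ) (TD : TreeDecomp H T) (wh : ℕ)
    (hTD : ∀ s, (TD.bags s).card ≤ wh + 1) :
    (∃ TD' : TreeDecomp G T, ∀ s, (TD'.bags s).card ≤ w * (wh + 1)) ∧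
    TreewidthLE G (w * (wh + 1) - 1) := by
  have hcard := Dec.card_composedBags_le TD hw.1 hTD
  exact ⟨⟨Dec.composedTreeDecomp TD, hcard⟩,
    κ, T, Dec.composedTreeDecomp TD, fun s => (hcard s).trans (by omega)⟩
end

section
/- If G admits an H-deconstruction of width w and H admits a tree-depth decomposition of depth d, then the tree-depth of G is at most w·d. -/
/-! Every vertex `v` of `G` has a *root*: the `D`-least bag containing `v`, which exists because
the bags containing `v` form a connected subgraph of `H`, and a connected set in a forest order
lies above each of its minimal elements. Ordering `G` lexicographically by (root, tie-break)
gives a forest order in which adjacent vertices are comparable: they lie in equal or adjacent,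
hence comparable, bags, and both roots lie below the higher of the two.
A chain of this order maps onto a chain of `D` with fibres inside single bags, so it has at
most `w * d` elements. -/

namespace TreeDepthDecomp

variable {ι : Type} {H : SimpleGraph ι} (D : TreeDepthDecomp H)

theorem comparable_of_le_of_le {a b c c' : ι} (hac : D.le a c) (hbc' : D.le b c')
    (hcc' : D.le c c' ∨ D.le c' c) : D.le a b ∨ D.le b a := by
  rcases hcc' with hcc' | hc'c
  · exact D.ancestors_chain (D.le_trans hac hcc') hbc'
  · exact D.ancestors_chain hac (D.le_trans hbc' hc'c)

theorem le_of_walk_of_minimal {S : Set ι} {m : ι} (hmin : ∀ x ∈ S, D.le x m → x = m)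
    {x y : S} (p : (H.induce S).Walk x y) (hmx : D.le m x) : D.le m y := by
  induction p with
  | nil => exact hmx
  | @cons a b c hab _ ih =>
    apply ih
    rcases D.adj_comparable hab with hle | hle
    · exact D.le_trans hmx hle
    · rcases D.ancestors_chain hmx hle with hmb | hbm
      · exact hmb
      · rw [hmin b b.2 hbm]
        exact D.le_refl m

theorem exists_le_of_connected [Finite ι] {S : Set ι} (hS : (H.induce S).Connected) :
    ∃ m ∈ S, ∀ h ∈ S, D.le m h := by
  let _ : PartialOrder ι :=
    { le := D.le, le_refl := D.le_refl, le_trans := fun _ _ _ => D.le_trans,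
      le_antisymm := fun _ _ => D.le_antisymm }
  have hne : S.Nonempty := Set.nonempty_coe_sort.mp hS.nonempty
  obtain ⟨m, hmS, hmin⟩ := S.toFinite.exists_minimal hne
  refine ⟨m, hmS, fun h hhS => ?_⟩
  obtain ⟨p⟩ := hS.preconnected ⟨m, hmS⟩ ⟨h, hhS⟩
  exact D.le_of_walk_of_minimal (fun x hxS hxm => D.le_antisymm hxm (hmin hxS hxm)) p (D.le_refl m)

variable {V : Type} {G : SimpleGraph V}

section lex

variable {V : Type} [LinearOrder V] (f : V → ι)

def LexLe (u v : V) : Prop :=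
  (D.le (f u) (f v) ∧ f u ≠ f v) ∨ (f u = f v ∧ u ≤ v)

variable {D f}

theorem le_of_lexLe {u v : V} (h : D.LexLe f u v) : D.le (f u) (f v) := by
  rcases h with ⟨h, -⟩ | ⟨h, -⟩
  · exact h
  · exact h ▸ D.le_refl (f u)

theorem lexLe_refl (u : V) : D.LexLe f u u := Or.inr ⟨rfl, le_rfl⟩

theorem lexLe_trans {u v x : V} (huv : D.LexLe f u v) (hvx : D.LexLe f v x) :
    D.LexLe f u x := by
  rcases huv with ⟨h1, h2⟩ | ⟨h1, h2⟩ <;> rcases hvx with ⟨h3, h4⟩ | ⟨h3, h4⟩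
  · exact Or.inl ⟨D.le_trans h1 h3, fun he => h2 (D.le_antisymm h1 (he ▸ h3))⟩
  · exact Or.inl ⟨h3 ▸ h1, h3 ▸ h2⟩
  · exact Or.inl ⟨h1 ▸ h3, h1 ▸ h4⟩
  · exact Or.inr ⟨h1.trans h3, h2.trans h4⟩

theorem lexLe_antisymm {u v : V} (huv : D.LexLe f u v) (hvu : D.LexLe f v u) : u = v := by
  rcases huv with ⟨h1, h2⟩ | ⟨h1, h2⟩ <;> rcases hvu with ⟨h3, h4⟩ | ⟨h3, h4⟩
  · exact absurd (D.le_antisymm h1 h3) h2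
  · exact absurd h3.symm h2
  · exact absurd h1.symm h4
  · exact _root_.le_antisymm h2 h4

theorem lexLe_comparable {u v : V} (h : D.le (f u) (f v) ∨ D.le (f v) (f u)) :
    D.LexLe f u v ∨ D.LexLe f v u := by
  by_cases he : f u = f v
  · exact (le_total u v).imp (fun h => Or.inr ⟨he, h⟩) (fun h => Or.inr ⟨he.symm, h⟩)
  · exact h.imp (fun h => Or.inl ⟨h, he⟩) (fun h => Or.inl ⟨h, Ne.symm he⟩)

variable {G : SimpleGraph V}

variable (D f) in
def lexLift (hf : ∀ {u w}, G.Adj u w → D.le (f u) (f w) ∨ D.le (f w) (f u)) :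
    TreeDepthDecomp G where
  le := D.LexLe f
  le_refl := lexLe_refl
  le_trans := lexLe_trans
  le_antisymm := lexLe_antisymm
  ancestors_chain hac hbc :=
    lexLe_comparable (D.ancestors_chain (le_of_lexLe hac) (le_of_lexLe hbc))
  adj_comparable huw := lexLe_comparable (hf huw)

theorem depthLE_lexLift {hf : ∀ {u w}, G.Adj u w → D.le (f u) (f w) ∨ D.le (f w) (f u)}
    {d w : ℕ} (hD : D.DepthLE d) (B : ι → Finset V) (hB : ∀ h, (B h).card ≤ w)
    (hfB : ∀ v, v ∈ B (f v)) : (D.lexLift f hf).DepthLE (w * d) := by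
  classical
  intro s hs
  have hchain : ∀ a ∈ s.image f, ∀ b ∈ s.image f, D.le a b ∨ D.le b a := by
    simp only [Finset.mem_image]
    rintro _ ⟨u, hu, rfl⟩ _ ⟨v, hv, rfl⟩
    exact (hs u hu v hv).imp le_of_lexLe le_of_lexLe
  have hfibre : ∀ h ∈ s.image f, (s.filter (f · = h)).card ≤ w := fun h _ =>
    (Finset.card_le_card fun v hv => (Finset.mem_filter.1 hv).2 ▸ hfB v).trans (hB h)
  calc s.card ≤ w * (s.image f).card := Finset.card_le_mul_card_image s w hfibre
    _ ≤ w * d := Nat.mul_le_mul_left w (hD _ hchain)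

end lex

end TreeDepthDecomp

namespace Deconstruction

variable {V ι : Type} {G : SimpleGraph V} {H : SimpleGraph ι} (Dec : Deconstruction G H)
  (D : TreeDepthDecomp H)

theorem exists_least_bag [Finite ι] (v : V) :
    ∃ m, v ∈ Dec.B m ∧ ∀ h, v ∈ Dec.B h → D.le m h :=
  D.exists_le_of_connected (Dec.bags_connected v)

theorem comparable_of_adj {r : V → ι} (hr : ∀ v h, v ∈ Dec.B h → D.le (r v) h) {u w : V}
    (huw : G.Adj u w) : D.le (r u) (r w) ∨ D.le (r w) (r u) := by
  rcases Dec.covers_edge huw with ⟨h, hu, hw⟩ | ⟨h, h', hhh', hu, hw⟩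
  · exact D.comparable_of_le_of_le (hr u h hu) (hr w h hw) (Or.inl (D.le_refl h))
  · exact D.comparable_of_le_of_le (hr u h hu) (hr w h' hw) (D.adj_comparable hhh')

end Deconstruction

theorem treedepth_of_deconstruction_general {V ι : Type} [Fintype ι] [DecidableEq V]
    (G : SimpleGraph V) (H : SimpleGraph ι) (Dec : Deconstruction G H)
    (w : ℕ) (hw : Dec.WidthLE w)
    (D : TreeDepthDecomp H) (d : ℕ) (hD : D.DepthLE d) :
    ∃ D' : TreeDepthDecomp G, D'.DepthLE (w * d) := by
  choose root mem_root root_le using Dec.exists_least_bag D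
  let _ : LinearOrder V := IsWellOrder.linearOrder WellOrderingRel
  exact ⟨D.lexLift root (Dec.comparable_of_adj D root_le),
    TreeDepthDecomp.depthLE_lexLift hD Dec.B hw.1 mem_root⟩

/-- if `G` admits an `H`-deconstruction of width `w` and `H` admits a
tree-depth decomposition of depth `d`, then the tree-depth of `G` is at most `w * d`. -/
theorem treedepth_of_deconstruction {V ι : Type} [Fintype V] [Fintype ι] [DecidableEq V]
    (G : SimpleGraph V) (H : SimpleGraph ι) (Dec : Deconstruction G H)
    (w : ℕ) (hw : Dec.WidthLE w)
    (D : TreeDepthDecomp H) (d : ℕ) (hD : D.DepthLE d) :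
    ∃ D' : TreeDepthDecomp G, D'.DepthLE (w * d) :=
  treedepth_of_deconstruction_general G H Dec w hw D d hD
end

section
/- For every n ∈ ℕ, there is a 3-CNF formula with named variables x_0,…,x_{n−1} (input), y_0,…,y_{⌈lg n⌉−1} (index), and z (output), with O(n) variables in total, such that an assignment of the named variables extends to a satisfying assignment if and only if z equals x_{ȳ}, where ȳ is the number encoded in binary by the index variables (and z = 0 is required when ȳ ≥ n); moreover the primal graph of the formula has tree-depth O(log n). -/
/-- A CNF formula over variables `α` is a finite set of clauses, each clause a finite set
of literals (a variable together with a polarity). `σ` satisfies the formula if every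
clause contains a literal evaluating to true. -/
def SatisfiesCNF {α : Type} (F : Finset (Finset (α × Bool))) (σ : α → Bool) : Prop :=
  ∀ C ∈ F, ∃ l ∈ C, σ l.1 = l.2

/-- The primal (Gaifman) graph of a CNF formula: variables are adjacent when they occur
together in some clause. -/
def cnfPrimal {α : Type} (F : Finset (Finset (α × Bool))) : SimpleGraph α :=
  SimpleGraph.fromRel fun x y => ∃ C ∈ F, (∃ b, (x, b) ∈ C) ∧ ∃ b, (y, b) ∈ C

/-!
The gadget is a complete binary tree of multiplexers of height `L = ⌈lg n⌉`: a node at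
height `h + 1` equals its right or left child according to the selector `y_h`, and the leaf
`i` equals `xᵢ` (or `false` when `i ≥ n`). By induction on the height, a satisfying assignment
gives the node `i` at height `h` the value of the leaf `i·2^h + (y_{h-1} … y_0)₂`, so the
root `z` is `x_ȳ`; conversely these values satisfy every clause. The tree has `2^(L+1) < 4n`
nodes. Putting the selectors in a chain above the tree and each `xᵢ` below its leaf, every
clause lies on a branch of a forest of depth `2L + 3`, which bounds the tree-depth of the
primal graph.
-/

open Finset

section CNF

variable {α β : Type}

def iteClauses [DecidableEq α] (s t f o : α) : Finset (Finset (α × Bool)) :=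
  {{(s, false), (t, false), (o, true)}, {(s, false), (t, true), (o, false)},
    {(s, true), (f, false), (o, true)}, {(s, true), (f, true), (o, false)}}

def eqClauses [DecidableEq α] (u v : α) : Finset (Finset (α × Bool)) :=
  {{(u, false), (v, true)}, {(u, true), (v, false)}}

theorem satisfiesCNF_iteClauses_iff [DecidableEq α] {s t f o : α} {σ : α → Bool} :
    SatisfiesCNF (iteClauses s t f o) σ ↔ σ o = if σ s then σ t else σ f := by
  simp only [SatisfiesCNF, iteClauses, mem_insert, mem_singleton, forall_eq_or_imp,
    forall_eq, exists_eq_or_imp, exists_eq_left]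
  cases σ s <;> cases σ t <;> cases σ f <;> cases σ o <;> simp

theorem satisfiesCNF_eqClauses_iff [DecidableEq α] {u v : α} {σ : α → Bool} :
    SatisfiesCNF (eqClauses u v) σ ↔ σ u = σ v := by
  simp only [SatisfiesCNF, eqClauses, mem_insert, mem_singleton, forall_eq_or_imp,
    forall_eq, exists_eq_or_imp, exists_eq_left]
  cases σ u <;> cases σ v <;> simp

theorem satisfiesCNF_unit_iff {u : α} {b : Bool} {σ : α → Bool} :
    SatisfiesCNF {{(u, b)}} σ ↔ σ u = b := by
  simp [SatisfiesCNF]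

theorem card_le_three_of_mem_iteClauses [DecidableEq α] {s t f o : α} {C : Finset (α × Bool)}
    (hC : C ∈ iteClauses s t f o) : C.card ≤ 3 := by
  simp only [iteClauses, mem_insert, mem_singleton] at hC
  rcases hC with rfl | rfl | rfl | rfl <;> exact card_le_three

theorem card_le_two_of_mem_eqClauses [DecidableEq α] {u v : α} {C : Finset (α × Bool)}
    (hC : C ∈ eqClauses u v) : C.card ≤ 2 := by
  simp only [eqClauses, mem_insert, mem_singleton] at hC
  rcases hC with rfl | rfl <;> exact card_le_two

def cnfMap (f : α ↪ β) (F : Finset (Finset (α × Bool))) : Finset (Finset (β × Bool)) :=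
  F.map (mapEmbedding (f.prodMap (Function.Embedding.refl Bool))).toEmbedding

theorem mem_cnfMap {f : α ↪ β} {F : Finset (Finset (α × Bool))} {C : Finset (β × Bool)} :
    C ∈ cnfMap f F ↔ ∃ D ∈ F, D.map (f.prodMap (Function.Embedding.refl Bool)) = C := by
  simp [cnfMap]

theorem satisfiesCNF_cnfMap_iff {f : α ↪ β} {F : Finset (Finset (α × Bool))}
    {σ : β → Bool} :
    SatisfiesCNF (cnfMap f F) σ ↔ SatisfiesCNF F (σ ∘ f) := by
  simp [SatisfiesCNF, mem_cnfMap]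

theorem card_le_of_mem_cnfMap {f : α ↪ β} {F : Finset (Finset (α × Bool))} {k : ℕ}
    (hF : ∀ C ∈ F, C.card ≤ k) : ∀ C ∈ cnfMap f F, C.card ≤ k := by
  simp only [mem_cnfMap]
  rintro _ ⟨D, hD, rfl⟩
  simpa using hF D hD

theorem exists_comp_embedding_iff (f : α ↪ β) (P : (α → Bool) → Prop) :
    (∃ σ : β → Bool, P (σ ∘ f)) ↔ ∃ τ, P τ :=
  ⟨fun ⟨_, h⟩ => ⟨_, h⟩, fun ⟨τ, h⟩ =>
    ⟨Function.extend f τ fun _ => false, by rwa [Function.extend_comp f.injective]⟩⟩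

end CNF

section Branches

variable {α β γ : Type}

/-- With the variables placed by `addr` in the forest of finite sequences, the variables of
every clause lie on one branch. -/
def ClausesOnBranches (addr : α → List γ) (F : Finset (Finset (α × Bool))) : Prop :=
  ∀ C ∈ F, ∃ w, ∀ l ∈ C, addr l.1 <+: w

theorem clausesOnBranches_iteClauses [DecidableEq α] {addr : α → List γ} {s t f o : α}
    (hs : addr s <+: addr o) (ht : addr o <+: addr t) (hf : addr o <+: addr f) :
    ClausesOnBranches addr (iteClauses s t f o) := by
  simp only [ClausesOnBranches, iteClauses, mem_insert, mem_singleton, forall_eq_or_imp,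
    forall_eq]
  exact ⟨⟨_, hs.trans ht, List.prefix_rfl, ht⟩, ⟨_, hs.trans ht, List.prefix_rfl, ht⟩,
    ⟨_, hs.trans hf, List.prefix_rfl, hf⟩, ⟨_, hs.trans hf, List.prefix_rfl, hf⟩⟩

theorem clausesOnBranches_eqClauses [DecidableEq α] {addr : α → List γ} {u v : α}
    (h : addr u <+: addr v) : ClausesOnBranches addr (eqClauses u v) := by
  simp only [ClausesOnBranches, eqClauses, mem_insert, mem_singleton, forall_eq_or_imp,
    forall_eq]
  exact ⟨⟨_, h, List.prefix_rfl⟩, ⟨_, h, List.prefix_rfl⟩⟩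

theorem clausesOnBranches_unit {addr : α → List γ} {u : α} {b : Bool} :
    ClausesOnBranches addr {{(u, b)}} := by
  intro C hC
  rw [mem_singleton.1 hC]
  exact ⟨addr u, by simp⟩

theorem ClausesOnBranches.cnfMap {f : α ↪ β} {addr : β → List γ}
    {F : Finset (Finset (α × Bool))} (hF : ClausesOnBranches (addr ∘ f) F) :
    ClausesOnBranches addr (cnfMap f F) := by
  simp only [ClausesOnBranches, mem_cnfMap]
  rintro _ ⟨D, hD, rfl⟩
  obtain ⟨w, hw⟩ := hF D hD
  refine ⟨w, fun _ hl => ?_⟩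
  obtain ⟨l, hlD, rfl⟩ := mem_map.1 hl
  exact hw l hlD

theorem ClausesOnBranches.prefix_or_prefix_of_adj {addr : α → List γ}
    {F : Finset (Finset (α × Bool))} (hF : ClausesOnBranches addr F) {u v : α}
    (h : (cnfPrimal F).Adj u v) : addr u <+: addr v ∨ addr v <+: addr u := by
  have key : ∀ {u v : α}, (∃ C ∈ F, (∃ b, (u, b) ∈ C) ∧ ∃ b, (v, b) ∈ C) →
      addr u <+: addr v ∨ addr v <+: addr u := by
    rintro u v ⟨C, hC, ⟨b, hu⟩, ⟨b', hv⟩⟩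
    obtain ⟨w, hw⟩ := hF C hC
    exact List.prefix_or_prefix_of_prefix (hw _ hu) (hw _ hv)
  rcases (SimpleGraph.fromRel_adj _ _ _).1 h with ⟨-, huv | hvu⟩
  exacts [key huv, (key hvu).symm]

end Branches

namespace TreeDepthDecomp

variable {V γ : Type} {G : SimpleGraph V}

def ofPrefix (addr : V → List γ) (hinj : Function.Injective addr)
    (hadj : ∀ {u v}, G.Adj u v → addr u <+: addr v ∨ addr v <+: addr u) :
    TreeDepthDecomp G where
  le u v := addr u <+: addr v
  le_refl _ := List.prefix_rfl
  le_trans := List.IsPrefix.trans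
  le_antisymm h h' := hinj (h.eq_of_length (Nat.le_antisymm h.length_le h'.length_le))
  ancestors_chain := List.prefix_or_prefix_of_prefix
  adj_comparable := hadj

theorem ofPrefix_depthLE {addr : V → List γ} {hinj : Function.Injective addr}
    {hadj : ∀ {u v}, G.Adj u v → addr u <+: addr v ∨ addr v <+: addr u} {d : ℕ}
    (hd : ∀ v, (addr v).length < d) : (ofPrefix addr hinj hadj).DepthLE d := by
  intro s hs
  have hlen : Set.InjOn (fun v => (addr v).length) s := by
    intro u hu v hv h
    rcases hs u hu v hv with h' | h'
    exacts [hinj (h'.eq_of_length h), hinj (h'.eq_of_length h.symm).symm]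
  simpa using card_le_card_of_injOn _ (fun v _ => mem_range.2 (hd v)) hlen

end TreeDepthDecomp

theorem clog_two_le_log_two_add_one (n : ℕ) : Nat.clog 2 n ≤ Nat.log 2 n + 1 :=
  Nat.clog_le_of_le_pow (Nat.lt_pow_succ_log_self one_lt_two n).le

theorem two_pow_sub_eq_two_mul {h L : ℕ} (hh : h < L) : 2 ^ (L - h) = 2 * 2 ^ (L - (h + 1)) := by
  rw [← pow_succ']
  congr 1
  omega

namespace Multiplexer

/-- Variables of the multiplexer over `n` inputs with `L` selector bits: inputs, selectors,
and the nodes of a complete binary tree of height `L` numbered as in a binary heap (root `1`,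
children of `k` are `2k` and `2k + 1`, the number `0` is unused). -/
abbrev Var (n L : ℕ) := Fin n ⊕ Fin L ⊕ Fin (2 ^ (L + 1))

variable {n L : ℕ}

def input (i : Fin n) : Var n L := .inl i

def sel (j : Fin L) : Var n L := .inr (.inl j)

/-- The `i`-th node at height `h`; the leaves have height `0`. -/
def node (h i : ℕ) : Var n L := .inr (.inr (Fin.ofNat _ (2 ^ (L - h) + i)))

def output : Var n L := node L 0

theorem heap_index_lt {h i : ℕ} (hh : h ≤ L) (hi : i < 2 ^ (L - h)) :
    2 ^ (L - h) + i < 2 ^ (L + 1) :=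
  calc 2 ^ (L - h) + i < 2 ^ (L - h + 1) := by rw [pow_succ]; omega
    _ ≤ 2 ^ (L + 1) := Nat.pow_le_pow_right two_pos (by omega)

theorem node_eq {h i : ℕ} (hh : h ≤ L) (hi : i < 2 ^ (L - h)) :
    (node h i : Var n L) = .inr (.inr ⟨2 ^ (L - h) + i, heap_index_lt hh hi⟩) := by
  simp [node, Fin.ext_iff, Nat.mod_eq_of_lt (heap_index_lt hh hi)]

def muxClauses (h : Fin L) (i : ℕ) : Finset (Finset (Var n L × Bool)) :=
  iteClauses (sel h) (node h (2 * i + 1)) (node h (2 * i)) (node (h + 1) i)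

def leafClauses (i : ℕ) : Finset (Finset (Var n L × Bool)) :=
  if hi : i < n then eqClauses (node 0 i) (input ⟨i, hi⟩) else {{(node 0 i, false)}}

def formula (n L : ℕ) : Finset (Finset (Var n L × Bool)) :=
  (univ.biUnion fun h : Fin L => (range (2 ^ (L - (h + 1)))).biUnion (muxClauses h)) ∪
    (range (2 ^ L)).biUnion leafClauses

theorem forall_mem_formula {P : Finset (Var n L × Bool) → Prop} :
    (∀ C ∈ formula n L, P C) ↔
      (∀ h : Fin L, ∀ i < 2 ^ (L - (h + 1)), ∀ C ∈ muxClauses h i, P C) ∧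
        ∀ i < 2 ^ L, ∀ C ∈ leafClauses i, P C := by
  simp only [formula, mem_union, mem_biUnion, mem_univ, mem_range, true_and, or_imp,
    forall_and, forall_exists_index, and_imp]
  exact and_congr ⟨fun H h i hi C hC => H C h i hi hC, fun H C h i hi hC => H h i hi C hC⟩
    ⟨fun H i hi C hC => H C i hi hC, fun H C i hi hC => H i hi C hC⟩

theorem card_le_three_of_mem_formula : ∀ C ∈ formula n L, C.card ≤ 3 := by
  refine forall_mem_formula.2 ⟨fun h i _ C hC => card_le_three_of_mem_iteClauses hC, ?_⟩
  intro i _ C hC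
  unfold leafClauses at hC
  split_ifs at hC
  · exact (card_le_two_of_mem_eqClauses hC).trans (by norm_num)
  · simp [mem_singleton.1 hC]

section Semantics

variable (a : Fin n → Bool) (b : Fin L → Bool)

def leafValue (i : ℕ) : Bool := if h : i < n then a ⟨i, h⟩ else false

def bit (j : ℕ) : Bool := if h : j < L then b ⟨j, h⟩ else false

def lowBits (h : ℕ) : ℕ := ∑ j ∈ range h, if bit b j then 2 ^ j else 0

/-- Following the selectors from `node h i` down to the leaves reaches the leaf
`i * 2 ^ h + lowBits b h`. -/
def nodeValue (h i : ℕ) : Bool := leafValue a (i * 2 ^ h + lowBits b h)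

theorem nodeValue_zero (i : ℕ) : nodeValue a b 0 i = leafValue a i := by
  simp [nodeValue, lowBits]

theorem nodeValue_succ {h : ℕ} (hh : h < L) (i : ℕ) :
    nodeValue a b (h + 1) i =
      if b ⟨h, hh⟩ then nodeValue a b h (2 * i + 1) else nodeValue a b h (2 * i) := by
  simp only [nodeValue, lowBits, sum_range_succ, bit, dif_pos hh]
  cases b ⟨h, hh⟩ <;> simp only [if_true, if_false, Bool.false_eq_true] <;> congr 1 <;> ring

theorem nodeValue_root :
    nodeValue a b L 0 = leafValue a (∑ j, if b j then 2 ^ (j : ℕ) else 0) := by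
  simp [nodeValue, lowBits, ← Fin.sum_univ_eq_sum_range, bit]

theorem satisfiesCNF_formula_iff {σ : Var n L → Bool} :
    SatisfiesCNF (formula n L) σ ↔
      (∀ h : Fin L, ∀ i < 2 ^ (L - (h + 1)),
        σ (node (h + 1) i) =
          if σ (sel h) then σ (node h (2 * i + 1)) else σ (node h (2 * i))) ∧
      ∀ i < 2 ^ L, σ (node 0 i) = leafValue (σ ∘ input) i := by
  refine forall_mem_formula.trans (and_congr
    (forall_congr' fun h => forall₂_congr fun i _ => satisfiesCNF_iteClauses_iff)
    (forall₂_congr fun i _ => ?_))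
  unfold leafClauses leafValue
  split_ifs
  exacts [satisfiesCNF_eqClauses_iff, satisfiesCNF_unit_iff]

theorem node_eq_nodeValue_of_satisfiesCNF {σ : Var n L → Bool}
    (hσ : SatisfiesCNF (formula n L) σ) {h i : ℕ} (hh : h ≤ L) (hi : i < 2 ^ (L - h)) :
    σ (node h i) = nodeValue (σ ∘ input) (σ ∘ sel) h i := by
  obtain ⟨hmux, hleaf⟩ := satisfiesCNF_formula_iff.1 hσ
  induction h generalizing i with
  | zero => rw [nodeValue_zero]; exact hleaf i hi
  | succ h ih =>
    have hL : h < L := by omega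
    have hpow := two_pow_sub_eq_two_mul hL
    rw [nodeValue_succ _ _ hL, hmux ⟨h, hL⟩ i hi, ih hL.le (by omega), ih hL.le (by omega)]
    rfl

/-- Every node gets the value it is forced to take; heap number `k` is a node of height
`L - log₂ k`. -/
def canonical : Var n L → Bool
  | .inl i => a i
  | .inr (.inl j) => b j
  | .inr (.inr k) => nodeValue a b (L - Nat.log 2 k) (k - 2 ^ Nat.log 2 k)

theorem canonical_node {h i : ℕ} (hh : h ≤ L) (hi : i < 2 ^ (L - h)) :
    canonical a b (node h i) = nodeValue a b h i := by
  have hlog : Nat.log 2 (2 ^ (L - h) + i) = L - h :=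
    Nat.log_eq_of_pow_le_of_lt_pow (by omega) (by rw [pow_succ]; omega)
  rw [node_eq hh hi]
  simp only [canonical, hlog]
  congr 1 <;> omega

theorem satisfiesCNF_canonical : SatisfiesCNF (formula n L) (canonical a b) := by
  refine satisfiesCNF_formula_iff.2 ⟨fun h i hi => ?_, fun i hi => ?_⟩
  · have hpow := two_pow_sub_eq_two_mul h.isLt
    rw [canonical_node a b h.isLt hi, canonical_node a b h.isLt.le (by omega),
      canonical_node a b h.isLt.le (by omega), nodeValue_succ a b h.isLt]
    rfl
  · rw [canonical_node a b (Nat.zero_le L) (by simpa using hi), nodeValue_zero]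
    rfl

theorem exists_satisfying_extension_iff (zv : Bool) :
    (∃ σ : Var n L → Bool, (∀ i, σ (input i) = a i) ∧ (∀ j, σ (sel j) = b j) ∧
        σ output = zv ∧ SatisfiesCNF (formula n L) σ) ↔
      zv = leafValue a (∑ j, if b j then 2 ^ (j : ℕ) else 0) := by
  rw [← nodeValue_root]
  constructor
  · rintro ⟨σ, hx, hy, rfl, hσ⟩
    have hxa : σ ∘ input = a := funext hx
    have hyb : σ ∘ sel = b := funext hy
    rw [output, node_eq_nodeValue_of_satisfiesCNF hσ le_rfl (by simp), hxa, hyb]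
  · rintro rfl
    exact ⟨canonical a b, fun _ => rfl, fun _ => rfl, canonical_node a b le_rfl (by simp),
      satisfiesCNF_canonical a b⟩

end Semantics

section Placement

/-- Heap node `k` hangs below a chain of `L` cells, at the position spelled by the binary
digits of `k`, most significant first. -/
def heapAddr (L k : ℕ) : List ℕ := List.replicate L 0 ++ (Nat.digits 2 k).reverse

theorem heapAddr_injective : Function.Injective (heapAddr L) := by
  intro k k' h
  simpa [heapAddr] using h

theorem heapAddr_bit {k c : ℕ} (hk : k ≠ 0) (hc : c < 2) :
    heapAddr L (c + 2 * k) = heapAddr L k ++ [c] := by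
  simp [heapAddr, Nat.digits_add 2 one_lt_two c k hc (Or.inr hk)]

theorem length_heapAddr (k : ℕ) : (heapAddr L k).length = L + (Nat.digits 2 k).length := by
  simp [heapAddr]

/-- The selectors form a chain above the tree, and the input `xᵢ` hangs below the leaf
`2 ^ L + i`. -/
def addr : Var n L → List ℕ
  | .inl i => heapAddr L (2 ^ L + i) ++ [0]
  | .inr (.inl j) => List.replicate j 0
  | .inr (.inr k) => heapAddr L k

theorem addr_injective : Function.Injective (addr : Var n L → List ℕ) := by
  have hx (i : Fin n) : L + 1 ≤ (Nat.digits 2 (2 ^ L + i)).length := by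
    by_contra h
    have := (Nat.digits_length_le_iff (k := L) one_lt_two (2 ^ L + i)).1 (by omega)
    omega
  have hk (k : Fin (2 ^ (L + 1))) : (Nat.digits 2 k).length ≤ L + 1 :=
    (Nat.digits_length_le_iff one_lt_two _).2 k.isLt
  rintro (i | j | k) (i' | j' | k') h <;>
    have hlen := congrArg List.length h <;>
    simp only [addr, List.length_append, List.length_replicate, length_heapAddr,
      List.length_singleton] at h hlen
  · exact congrArg _ (Fin.ext (by simpa using heapAddr_injective (List.append_cancel_right h)))
  · have := j'.isLt; omega
  · have := hx i; have := hk k'; omega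
  · have := j.isLt; omega
  · exact congrArg _ (congrArg _ (Fin.ext hlen))
  · have := j.isLt; omega
  · have := hx i'; have := hk k; omega
  · have := j'.isLt; omega
  · exact congrArg _ (congrArg _ (Fin.ext (heapAddr_injective h)))

theorem length_addr_lt (hn : n ≤ 2 ^ L) (v : Var n L) : (addr v).length < 2 * L + 3 := by
  have hdig {k : ℕ} (hk : k < 2 ^ (L + 1)) : (Nat.digits 2 k).length ≤ L + 1 :=
    (Nat.digits_length_le_iff one_lt_two _).2 hk
  rcases v with i | j | k
  · have := hdig (k := 2 ^ L + i) (by rw [pow_succ]; omega)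
    simp only [addr, List.length_append, length_heapAddr, List.length_singleton]
    omega
  · simp only [addr, List.length_replicate]
    omega
  · have := hdig k.isLt
    simp only [addr, length_heapAddr]
    omega

theorem addr_node {h i : ℕ} (hh : h ≤ L) (hi : i < 2 ^ (L - h)) :
    addr (node h i : Var n L) = heapAddr L (2 ^ (L - h) + i) := by
  rw [node_eq hh hi]
  rfl

theorem addr_node_child {h i c : ℕ} (hh : h < L) (hi : i < 2 ^ (L - (h + 1))) (hc : c < 2) :
    addr (node h (2 * i + c) : Var n L) = addr (node (h + 1) i : Var n L) ++ [c] := by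
  have hpow := two_pow_sub_eq_two_mul hh
  rw [addr_node hh.le (by omega), addr_node hh hi, ← heapAddr_bit (by positivity) hc]
  congr 1
  show 2 ^ (L - h) + (2 * i + c) = c + 2 * (2 ^ (L - (h + 1)) + i)
  omega

theorem clausesOnBranches_formula : ClausesOnBranches addr (formula n L) := by
  refine forall_mem_formula.2
    ⟨fun h i hi => clausesOnBranches_iteClauses ?_ ?_ ?_, fun i hi => ?_⟩
  · rw [addr_node h.isLt hi]
    refine List.IsPrefix.trans ⟨List.replicate (L - h) 0, ?_⟩ (List.prefix_append _ _)
    change List.replicate h 0 ++ _ = _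
    rw [← List.replicate_add, Nat.add_sub_cancel' h.isLt.le]
  · rw [addr_node_child h.isLt hi one_lt_two]
    exact List.prefix_append _ _
  · have hf := addr_node_child (n := n) (c := 0) h.isLt hi two_pos
    rw [Nat.add_zero] at hf
    rw [hf]
    exact List.prefix_append _ _
  · unfold leafClauses
    split_ifs
    · refine clausesOnBranches_eqClauses ?_
      rw [addr_node (Nat.zero_le L) (by simpa using hi), Nat.sub_zero]
      exact List.prefix_append _ _
    · exact clausesOnBranches_unit

end Placement

theorem injective_input_sel_output : Function.Injective
    (Sum.elim (Sum.elim input sel) fun _ : Unit => (output : Var n L)) := by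
  rintro ((i | j) | ⟨⟩) ((i' | j') | ⟨⟩) h <;> simp_all [input, sel, output, node]

theorem card_var_clog_le (n : ℕ) : Fintype.card (Var n (Nat.clog 2 n)) ≤ 7 * (n + 1) := by
  simp only [Fintype.card_sum, Fintype.card_fin, pow_succ]
  rcases Nat.eq_zero_or_pos n with rfl | hn
  · simp
  have hpow : 2 ^ Nat.clog 2 n ≤ 2 * n :=
    calc 2 ^ Nat.clog 2 n ≤ 2 ^ (Nat.log 2 n + 1) :=
          Nat.pow_le_pow_right two_pos (clog_two_le_log_two_add_one n)
      _ ≤ 2 * n := by rw [pow_succ']; exact Nat.mul_le_mul_left 2 (Nat.pow_log_le_self 2 hn.ne')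
  have := Nat.lt_two_pow_self (n := Nat.clog 2 n)
  omega

end Multiplexer

open Multiplexer in
/-- the random access gadget. There is a constant `c` such that for every
`n` there is a 3-CNF formula with at most `c·(n+1)` variables, among them named pairwise
distinct variables `x₀,…,x_{n-1}` (input), `y₀,…,y_{⌈lg n⌉-1}` (index) and `z` (output),
such that an assignment of the named variables extends to a satisfying assignment iff
`z = x_{ȳ}` where `ȳ` is the number encoded in binary by the index variables (with
`z = false` required when `ȳ ≥ n`); moreover the primal graph of the formula admits a
tree-depth decomposition of depth `O(log n)`. -/
theorem random_access_gadget :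
    ∃ c : ℕ, ∀ n : ℕ,
      ∃ (N : ℕ) (F : Finset (Finset (Fin N × Bool)))
        (x : Fin n → Fin N) (y : Fin (Nat.clog 2 n) → Fin N) (z : Fin N),
        N ≤ c * (n + 1) ∧
        (∀ C ∈ F, C.card ≤ 3) ∧
        Function.Injective (Sum.elim (Sum.elim x y) fun _ : Unit => z) ∧
        (∀ (a : Fin n → Bool) (b : Fin (Nat.clog 2 n) → Bool) (zv : Bool),
          (∃ σ : Fin N → Bool, (∀ i, σ (x i) = a i) ∧ (∀ j, σ (y j) = b j) ∧
              σ z = zv ∧ SatisfiesCNF F σ) ↔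
            zv = if h : (∑ j, if b j then 2 ^ (j : ℕ) else 0) < n
              then a ⟨_, h⟩ else false) ∧
        ∃ D : TreeDepthDecomp (cnfPrimal F), D.DepthLE (c * (Nat.log 2 n + 1)) := by
  refine ⟨7, fun n => ?_⟩
  let e := Fintype.equivFin (Var n (Nat.clog 2 n))
  refine ⟨_, cnfMap e.toEmbedding (formula n _), e ∘ input, e ∘ sel, e output,
    card_var_clog_le n, card_le_of_mem_cnfMap card_le_three_of_mem_formula, ?_,
    fun a b zv => ?_, ?_⟩
  · convert e.injective.comp injective_input_sel_output using 1
    ext ((_ | _) | _) <;> rfl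
  · simp only [satisfiesCNF_cnfMap_iff]
    exact (exists_comp_embedding_iff e.toEmbedding _).trans (exists_satisfying_extension_iff a b zv)
  · have hpaths : ClausesOnBranches (addr ∘ e.symm) (cnfMap e.toEmbedding (formula n _)) :=
      ClausesOnBranches.cnfMap (by simpa [Function.comp_def] using clausesOnBranches_formula)
    refine ⟨.ofPrefix _ (addr_injective.comp e.symm.injective) hpaths.prefix_or_prefix_of_adj,
      TreeDepthDecomp.ofPrefix_depthLE fun v => ?_⟩
    have := length_addr_lt (Nat.le_pow_clog one_lt_two n) (e.symm v)
    have := clog_two_le_log_two_add_one n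
    simp only [Function.comp_apply]
    omega
end
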